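/- For any four points P_i = (x_i, y_i) ∈ ℝ² and all (x̂,ŷ) ∈ ℝ², with X(x̂,ŷ) = σ₁x₁+σ₂x₂+σ₃x₃+σ₄x₄ and Y(x̂,ŷ) = σ₁y₁+σ₂y₂+σ₃y₃+σ₄y₄ the coordinates of the bilinear map: −((x₁²−x₄²)/2)·φ̂_{0,0} + ((x₂²−x₁²)/2)·φ̂_{1,0} + ((x₃²−x₂²)/2)·φ̂_{1,1} − ((x₄²−x₃²)/2)·φ̂_{0,1} + (x₁₄²/2)·φ̂_{0,2} + (x₂₁²/2)·φ̂_{2,0} + (x₃₂²/2)·φ̂_{1,2} + (x₄₃²/2)·φ̂_{2,1} + ((x₃₂+x₁₄)²/2)·φ̂_{2,2} = X(x̂,ŷ)·(B₁₁(x̂,ŷ), B₁₂(x̂,ŷ)), and the analogous identity with every x replaced by y equals Y(x̂,ŷ)·(B₂₁(x̂,ŷ), B₂₂(x̂,ŷ)); equivalently these combinations equal B(x̂,ŷ)ᵀ(X,0)ᵀ and B(x̂,ŷ)ᵀ(0,Y)ᵀ, so (x,0) and (0,y) are reproduced under the contravariant transform. -/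
import Mathlib


open scoped BigOperators

/-- Generalized binomial coefficient `binom(x, k)` for real `x` and natural `k`. -/
noncomputable def genBinom (x : ℝ) (k : ℕ) : ℝ :=
  (∏ i ∈ Finset.range k, (x - (i : ℝ))) / (Nat.factorial k : ℝ)

/-- Jacobi polynomial `J_n^{α,β}(ζ) = Σ_{k=0}^{n} binom(n+α, n−k)·binom(n+β, k)·((ζ−1)/2)^k·((ζ+1)/2)^(n−k)`. -/
noncomputable def jacobiP (n : ℕ) (α β : ℝ) (ζ : ℝ) : ℝ :=
  ∑ k ∈ Finset.range (n + 1),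
    genBinom ((n : ℝ) + α) (n - k) * genBinom ((n : ℝ) + β) k *
      ((ζ - 1) / 2) ^ k * ((ζ + 1) / 2) ^ (n - k)

/-- Generalized Jacobi polynomial of index `(−1,−1)`. -/
noncomputable def K1 : ℕ → ℝ → ℝ
  | 0, ζ => (1 - ζ) / 2
  | 1, ζ => (1 + ζ) / 2
  | (n + 2), ζ => ((ζ ^ 2 - 1) / 4) * jacobiP n 1 1 ζ

/-- Entry `B₁₁` of the Jacobian matrix of the bilinear map: `(x₂₁(1−ŷ) + x₃₄(1+ŷ))/4`. -/
noncomputable def B11 (x1 x2 x3 x4 yh : ℝ) : ℝ :=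
  ((x2 - x1) * (1 - yh) + (x3 - x4) * (1 + yh)) / 4

/-- Entry `B₁₂`: `(x₄₁(1−x̂) + x₃₂(1+x̂))/4`. -/
noncomputable def B12 (x1 x2 x3 x4 xh : ℝ) : ℝ :=
  ((x4 - x1) * (1 - xh) + (x3 - x2) * (1 + xh)) / 4

/-- Entry `B₂₁`: `(y₂₁(1−ŷ) + y₃₄(1+ŷ))/4`. -/
noncomputable def B21 (y1 y2 y3 y4 yh : ℝ) : ℝ :=
  ((y2 - y1) * (1 - yh) + (y3 - y4) * (1 + yh)) / 4

/-- Entry `B₂₂`: `(y₄₁(1−x̂) + y₃₂(1+x̂))/4`. -/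
noncomputable def B22 (y1 y2 y3 y4 xh : ℝ) : ℝ :=
  ((y4 - y1) * (1 - xh) + (y3 - y2) * (1 + xh)) / 4

/-- The Jacobian determinant `J(x̂,ŷ) = det B(x̂,ŷ)` of the bilinear map. -/
noncomputable def Jdet (x1 x2 x3 x4 y1 y2 y3 y4 xh yh : ℝ) : ℝ :=
  B11 x1 x2 x3 x4 yh * B22 y1 y2 y3 y4 xh - B12 x1 x2 x3 x4 xh * B21 y1 y2 y3 y4 yh

/-- Lowest-order function edge mode `φ̂_{0,0}`. -/
noncomputable def phi00 (z : ℝ × ℝ) : ℝ × ℝ :=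
  (z.2 * (z.2 ^ 2 - 1) * (3 * z.1 ^ 2 - 5) / 32,
   -(z.1 * (z.1 ^ 2 - 1) * (3 * z.2 ^ 2 - 5)) / 32 - (z.1 - 1) / 4)

/-- Lowest-order function edge mode `φ̂_{1,0}`. -/
noncomputable def phi10 (z : ℝ × ℝ) : ℝ × ℝ :=
  (-(z.2 * (z.2 ^ 2 - 1) * (3 * z.1 ^ 2 - 5)) / 32 - (z.2 - 1) / 4,
   z.1 * (z.1 ^ 2 - 1) * (3 * z.2 ^ 2 - 5) / 32)

/-- Lowest-order function edge mode `φ̂_{1,1}`. -/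
noncomputable def phi11 (z : ℝ × ℝ) : ℝ × ℝ :=
  (-(z.2 * (z.2 ^ 2 - 1) * (3 * z.1 ^ 2 - 5)) / 32,
   z.1 * (z.1 ^ 2 - 1) * (3 * z.2 ^ 2 - 5) / 32 + (1 + z.1) / 4)

/-- Lowest-order function edge mode `φ̂_{0,1}`. -/
noncomputable def phi01 (z : ℝ × ℝ) : ℝ × ℝ :=
  (z.2 * (z.2 ^ 2 - 1) * (3 * z.1 ^ 2 - 5) / 32 + (1 + z.2) / 4,
   -(z.1 * (z.1 ^ 2 - 1) * (3 * z.2 ^ 2 - 5)) / 32)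

/-- General function mode `φ̂_{m,n} = ∇[K_m^{−1,−1}(x̂)·K_n^{−1,−1}(ŷ)]` (used for `max(m,n) ≥ 2`). -/
noncomputable def phiHat (m n : ℕ) (z : ℝ × ℝ) : ℝ × ℝ :=
  (deriv (fun t => K1 m t * K1 n z.2) z.1, deriv (fun t => K1 m z.1 * K1 n t) z.2)

/-- First coordinate of the bilinear map: `X = σ₁x₁ + σ₂x₂ + σ₃x₃ + σ₄x₄`. -/
noncomputable def Xc (x1 x2 x3 x4 : ℝ) (z : ℝ × ℝ) : ℝ :=
  (1 - z.1) * (1 - z.2) / 4 * x1 + (1 + z.1) * (1 - z.2) / 4 * x2 +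
    (1 + z.1) * (1 + z.2) / 4 * x3 + (1 - z.1) * (1 + z.2) / 4 * x4

/-- Second coordinate of the bilinear map: `Y = σ₁y₁ + σ₂y₂ + σ₃y₃ + σ₄y₄`. -/
noncomputable def Yc (y1 y2 y3 y4 : ℝ) (z : ℝ × ℝ) : ℝ :=
  (1 - z.1) * (1 - z.2) / 4 * y1 + (1 + z.1) * (1 - z.2) / 4 * y2 +
    (1 + z.1) * (1 + z.2) / 4 * y3 + (1 - z.1) * (1 + z.2) / 4 * y4

lemma K1_two (ζ : ℝ) : K1 2 ζ = (ζ ^ 2 - 1) / 4 := by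
  show ((ζ ^ 2 - 1) / 4) * jacobiP 0 1 1 ζ = (ζ ^ 2 - 1) / 4
  simp [jacobiP, genBinom]

lemma deriv_quad (a b c x : ℝ) : deriv (fun t => a * t ^ 2 + b * t + c) x = 2 * a * x + b := by
  have h : HasDerivAt (fun t : ℝ => a * t ^ 2 + b * t + c) (a * (2 * x ^ 1) + b * 1) x := by
    exact (((hasDerivAt_pow 2 x).const_mul a).add ((hasDerivAt_id x).const_mul b)).add_const c
  have := h.deriv
  rw [this]; ring

lemma deriv_form (f : ℝ → ℝ) (a b c x : ℝ) (h : f = fun t => a * t ^ 2 + b * t + c) :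
    deriv f x = 2 * a * x + b := by rw [h]; exact deriv_quad a b c x

lemma phiHat02 (z : ℝ × ℝ) :
    phiHat 0 2 z = (-(z.2 ^ 2 - 1) / 8, (1 - z.1) / 2 * (z.2 / 2)) := by
  unfold phiHat
  have h1 : deriv (fun t => K1 0 t * K1 2 z.2) z.1 = -(z.2 ^ 2 - 1) / 8 := by
    rw [deriv_form _ 0 (-((z.2 ^ 2 - 1) / 8)) ((z.2 ^ 2 - 1) / 8) z.1
      (by funext t; simp [K1, jacobiP, genBinom]; ring)]; ring
  have h2 : deriv (fun t => K1 0 z.1 * K1 2 t) z.2 = (1 - z.1) / 2 * (z.2 / 2) := by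
    rw [deriv_form _ ((1 - z.1) / 8) 0 (-((1 - z.1) / 8)) z.2
      (by funext t; simp [K1, jacobiP, genBinom]; ring)]; ring
  rw [h1, h2]

lemma phiHat20 (z : ℝ × ℝ) :
    phiHat 2 0 z = (z.1 / 2 * ((1 - z.2) / 2), -(z.1 ^ 2 - 1) / 8) := by
  unfold phiHat
  have h1 : deriv (fun t => K1 2 t * K1 0 z.2) z.1 = z.1 / 2 * ((1 - z.2) / 2) := by
    rw [deriv_form _ ((1 - z.2) / 8) 0 (-((1 - z.2) / 8)) z.1
      (by funext t; simp [K1, jacobiP, genBinom]; ring)]; ring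
  have h2 : deriv (fun t => K1 2 z.1 * K1 0 t) z.2 = -(z.1 ^ 2 - 1) / 8 := by
    rw [deriv_form _ 0 (-((z.1 ^ 2 - 1) / 8)) ((z.1 ^ 2 - 1) / 8) z.2
      (by funext t; simp [K1, jacobiP, genBinom]; ring)]; ring
  rw [h1, h2]

lemma phiHat12 (z : ℝ × ℝ) :
    phiHat 1 2 z = ((z.2 ^ 2 - 1) / 8, (1 + z.1) / 2 * (z.2 / 2)) := by
  unfold phiHat
  have h1 : deriv (fun t => K1 1 t * K1 2 z.2) z.1 = (z.2 ^ 2 - 1) / 8 := by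
    rw [deriv_form _ 0 ((z.2 ^ 2 - 1) / 8) ((z.2 ^ 2 - 1) / 8) z.1
      (by funext t; simp [K1, jacobiP, genBinom]; ring)]; ring
  have h2 : deriv (fun t => K1 1 z.1 * K1 2 t) z.2 = (1 + z.1) / 2 * (z.2 / 2) := by
    rw [deriv_form _ ((1 + z.1) / 8) 0 (-((1 + z.1) / 8)) z.2
      (by funext t; simp [K1, jacobiP, genBinom]; ring)]; ring
  rw [h1, h2]

lemma phiHat21 (z : ℝ × ℝ) :
    phiHat 2 1 z = (z.1 / 2 * ((1 + z.2) / 2), (z.1 ^ 2 - 1) / 8) := by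
  unfold phiHat
  have h1 : deriv (fun t => K1 2 t * K1 1 z.2) z.1 = z.1 / 2 * ((1 + z.2) / 2) := by
    rw [deriv_form _ ((1 + z.2) / 8) 0 (-((1 + z.2) / 8)) z.1
      (by funext t; simp [K1, jacobiP, genBinom]; ring)]; ring
  have h2 : deriv (fun t => K1 2 z.1 * K1 1 t) z.2 = (z.1 ^ 2 - 1) / 8 := by
    rw [deriv_form _ 0 ((z.1 ^ 2 - 1) / 8) ((z.1 ^ 2 - 1) / 8) z.2
      (by funext t; simp [K1, jacobiP, genBinom]; ring)]; ring
  rw [h1, h2]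

lemma phiHat22 (z : ℝ × ℝ) :
    phiHat 2 2 z = (z.1 / 2 * ((z.2 ^ 2 - 1) / 4), (z.1 ^ 2 - 1) / 4 * (z.2 / 2)) := by
  unfold phiHat
  have h1 : deriv (fun t => K1 2 t * K1 2 z.2) z.1 = z.1 / 2 * ((z.2 ^ 2 - 1) / 4) := by
    rw [deriv_form _ ((z.2 ^ 2 - 1) / 16) 0 (-((z.2 ^ 2 - 1) / 16)) z.1
      (by funext t; simp [K1, jacobiP, genBinom]; ring)]; ring
  have h2 : deriv (fun t => K1 2 z.1 * K1 2 t) z.2 = (z.1 ^ 2 - 1) / 4 * (z.2 / 2) := by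
    rw [deriv_form _ ((z.1 ^ 2 - 1) / 16) 0 (-((z.1 ^ 2 - 1) / 16)) z.2
      (by funext t; simp [K1, jacobiP, genBinom]; ring)]; ring
  rw [h1, h2]

/-- The fields `(x,0)` and `(0,y)` are reproduced under the contravariant transform:
the indicated combinations of modes equal `X·(B₁₁,B₁₂) = Bᵀ(X,0)ᵀ` and
`Y·(B₂₁,B₂₂) = Bᵀ(0,Y)ᵀ` respectively. -/
theorem linear_fields_reproduced (x1 x2 x3 x4 y1 y2 y3 y4 : ℝ) (z : ℝ × ℝ) :
    ((-((x1 ^ 2 - x4 ^ 2) / 2)) • phi00 z + ((x2 ^ 2 - x1 ^ 2) / 2) • phi10 z +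
        ((x3 ^ 2 - x2 ^ 2) / 2) • phi11 z + (-((x4 ^ 2 - x3 ^ 2) / 2)) • phi01 z +
        ((x1 - x4) ^ 2 / 2) • phiHat 0 2 z + ((x2 - x1) ^ 2 / 2) • phiHat 2 0 z +
        ((x3 - x2) ^ 2 / 2) • phiHat 1 2 z + ((x4 - x3) ^ 2 / 2) • phiHat 2 1 z +
        (((x3 - x2) + (x1 - x4)) ^ 2 / 2) • phiHat 2 2 z
      = Xc x1 x2 x3 x4 z • (B11 x1 x2 x3 x4 z.2, B12 x1 x2 x3 x4 z.1)) ∧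
    ((-((y1 ^ 2 - y4 ^ 2) / 2)) • phi00 z + ((y2 ^ 2 - y1 ^ 2) / 2) • phi10 z +
        ((y3 ^ 2 - y2 ^ 2) / 2) • phi11 z + (-((y4 ^ 2 - y3 ^ 2) / 2)) • phi01 z +
        ((y1 - y4) ^ 2 / 2) • phiHat 0 2 z + ((y2 - y1) ^ 2 / 2) • phiHat 2 0 z +
        ((y3 - y2) ^ 2 / 2) • phiHat 1 2 z + ((y4 - y3) ^ 2 / 2) • phiHat 2 1 z +
        (((y3 - y2) + (y1 - y4)) ^ 2 / 2) • phiHat 2 2 z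
      = Yc y1 y2 y3 y4 z • (B21 y1 y2 y3 y4 z.2, B22 y1 y2 y3 y4 z.1)) := by
  constructor <;>
  · rw [phiHat02, phiHat20, phiHat12, phiHat21, phiHat22]
    apply Prod.ext <;>
      simp [phi00, phi10, phi11, phi01, Xc, Yc, B11, B12, B21, B22, Prod.smul_def] <;> ring
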